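/- arXiv:0912.1050 — 4 statements merged into one kernel-verified Lean document; each statement's English description precedes it below -/
import Mathlib

section
/- If a grid graph G contains k vertices that pairwise differ in both their x-coordinates and their y-coordinates, then every covering walk of G has turn cost at least k−1. -/
/-- Adjacency in the integer grid: points of `ℤ × ℤ` at Euclidean distance 1. -/
def gridAdj (u v : ℤ × ℤ) : Prop :=
  (u.1 = v.1 ∧ |u.2 - v.2| = 1) ∨ (u.2 = v.2 ∧ |u.1 - v.1| = 1)

/-- Turn cost at a grid vertex `x`, entering from `u` and leaving to `w`:
0 iff both edges are horizontal or both are vertical. -/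
def gridTurn (x u w : ℤ × ℤ) : ℕ :=
  if (u.2 = x.2 ∧ w.2 = x.2) ∨ (u.1 = x.1 ∧ w.1 = x.1) then 0 else 1

/-- Turn cost of a walk given as a list of vertices. -/
def turnCost {V : Type*} (f : V → V → V → ℕ) (w : List V) : ℕ :=
  ((w.zip (w.tail.zip w.tail.tail)).map (fun p => f p.2.1 p.1 p.2.2)).sum

def online (a b s : ℤ × ℤ) : Prop :=
  (a.1 = b.1 ∧ s.1 = a.1) ∨ (a.2 = b.2 ∧ s.2 = a.2)

instance (a b s : ℤ × ℤ) : Decidable (online a b s) := by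
  unfold online; infer_instance

lemma gridAdj_cases {a b : ℤ × ℤ} (h : gridAdj a b) :
    (a.1 = b.1 ∧ a.2 ≠ b.2) ∨ (a.2 = b.2 ∧ a.1 ≠ b.1) := by
  rcases h with ⟨h1, h2⟩ | ⟨h1, h2⟩
  · exact Or.inl ⟨h1, fun e => by simp [e] at h2⟩
  · exact Or.inr ⟨h1, fun e => by simp [e] at h2⟩

lemma online_self_left {a b : ℤ × ℤ} (h : gridAdj a b) : online a b a := by
  rcases gridAdj_cases h with ⟨h1, _⟩ | ⟨h1, _⟩
  · exact Or.inl ⟨h1, rfl⟩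
  · exact Or.inr ⟨h1, rfl⟩

lemma online_self_right {a b : ℤ × ℤ} (h : gridAdj a b) : online a b b := by
  rcases gridAdj_cases h with ⟨h1, _⟩ | ⟨h1, _⟩
  · exact Or.inl ⟨h1, h1.symm⟩
  · exact Or.inr ⟨h1, h1.symm⟩

lemma turnCost_cons₃ (f : (ℤ×ℤ) → (ℤ×ℤ) → (ℤ×ℤ) → ℕ) (a b c : ℤ × ℤ) (l : List (ℤ × ℤ)) :
    turnCost f (a :: b :: c :: l) = f b a c + turnCost f (b :: c :: l) := by
  simp [turnCost]

lemma online_card (S : Finset (ℤ × ℤ))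
    (hdist : ∀ u ∈ S, ∀ v ∈ S, u ≠ v → u.1 ≠ v.1 ∧ u.2 ≠ v.2)
    {a b : ℤ × ℤ} (hab : gridAdj a b) :
    (S.filter (fun s => online a b s)).card ≤ 1 := by
  apply Finset.card_le_one.mpr
  intro s hs t ht
  simp only [Finset.mem_filter] at hs ht
  by_contra hne
  have hd := hdist s hs.1 t ht.1 hne
  rcases gridAdj_cases hab with ⟨h1, h2⟩ | ⟨h1, h2⟩
  · rcases hs.2 with ⟨_, e1⟩ | ⟨e, _⟩
    · rcases ht.2 with ⟨_, e2⟩ | ⟨e, _⟩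
      · exact hd.1 (e1.trans e2.symm)
      · exact h2 e
    · exact h2 e
  · rcases hs.2 with ⟨e, _⟩ | ⟨_, e1⟩
    · exact h2 e
    · rcases ht.2 with ⟨e, _⟩ | ⟨_, e2⟩
      · exact h2 e
      · exact hd.2 (e1.trans e2.symm)

lemma aux (S : Finset (ℤ × ℤ))
    (hdist : ∀ u ∈ S, ∀ v ∈ S, u ≠ v → u.1 ≠ v.1 ∧ u.2 ≠ v.2) :
    ∀ (w : List (ℤ × ℤ)) (a b : ℤ × ℤ), (a :: b :: w).Chain' gridAdj →
      (S.filter (fun s => s ∈ (a :: b :: w) ∧ ¬ online a b s)).card ≤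
        turnCost gridTurn (a :: b :: w) := by
  intro w
  induction w with
  | nil =>
    intro a b h
    have hab : gridAdj a b := (List.isChain_cons_cons.mp h).1
    have : S.filter (fun s => s ∈ ([a, b] : List (ℤ × ℤ)) ∧ ¬ online a b s) = ∅ := by
      apply Finset.filter_eq_empty_iff.mpr
      intro s _ hcontra
      obtain ⟨hmem, hno⟩ := hcontra
      simp only [List.mem_cons, List.not_mem_nil, or_false, List.mem_singleton] at hmem
      rcases hmem with h1 | h1 <;> subst h1
      · exact hno (online_self_left hab)
      · exact hno (online_self_right hab)
    rw [this]
    simp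
  | cons c rest ih =>
    intro a b h
    have hab : gridAdj a b := (List.isChain_cons_cons.mp h).1
    have htail : (b :: c :: rest).Chain' gridAdj := (List.isChain_cons_cons.mp h).2
    have hbc : gridAdj b c := (List.isChain_cons_cons.mp htail).1
    rw [turnCost_cons₃]
    by_cases hst : (a.2 = b.2 ∧ c.2 = b.2) ∨ (a.1 = b.1 ∧ c.1 = b.1)
    · -- no turn at b
      have ht0 : gridTurn b a c = 0 := by simp [gridTurn, hst]
      rw [ht0, zero_add]
      refine le_trans (Finset.card_le_card ?_) (ih b c htail)
      intro s hs
      simp only [Finset.mem_filter, List.mem_cons] at hs ⊢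
      obtain ⟨hS, hmem, hno⟩ := hs
      rcases hmem with h1 | hmem
      · subst h1; exact absurd (online_self_left hab) hno
      refine ⟨hS, hmem, fun hon => hno ?_⟩
      -- online b c s → online a b s when straight
      rcases hst with ⟨e1, e2⟩ | ⟨e1, e2⟩
      · -- horizontal: a.2 = b.2, c.2 = b.2
        rcases hon with ⟨e, _⟩ | ⟨_, e3⟩
        · rcases gridAdj_cases hbc with ⟨_, hne⟩ | ⟨_, hne⟩
          · exact absurd e2.symm hne
          · exact absurd e hne
        · exact Or.inr ⟨e1, e3.trans e1.symm⟩
      · -- vertical: a.1 = b.1, c.1 = b.1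
        rcases hon with ⟨_, e3⟩ | ⟨e, _⟩
        · exact Or.inl ⟨e1, e3.trans e1.symm⟩
        · rcases gridAdj_cases hbc with ⟨_, hne⟩ | ⟨_, hne⟩
          · exact absurd e hne
          · exact absurd e2.symm hne
    · have ht1 : gridTurn b a c = 1 := by simp [gridTurn, hst]
      rw [ht1]
      have hsub : S.filter (fun s => s ∈ (a :: b :: c :: rest) ∧ ¬ online a b s) ⊆
          S.filter (fun s => s ∈ (b :: c :: rest) ∧ ¬ online b c s) ∪
          S.filter (fun s => online b c s) := by
        intro s hs
        simp only [Finset.mem_filter, Finset.mem_union, List.mem_cons] at hs ⊢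
        obtain ⟨hS, hmem, hno⟩ := hs
        rcases hmem with h1 | hmem
        · subst h1; exact absurd (online_self_left hab) hno
        by_cases hon : online b c s
        · exact Or.inr ⟨hS, hon⟩
        · exact Or.inl ⟨hS, hmem, hon⟩
      calc (S.filter (fun s => s ∈ (a :: b :: c :: rest) ∧ ¬ online a b s)).card
          ≤ _ := Finset.card_le_card hsub
        _ ≤ (S.filter (fun s => s ∈ (b :: c :: rest) ∧ ¬ online b c s)).card +
            (S.filter (fun s => online b c s)).card := Finset.card_union_le _ _
        _ ≤ turnCost gridTurn (b :: c :: rest) + 1 := by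
            exact Nat.add_le_add (ih b c htail) (online_card S hdist hbc)
        _ = 1 + turnCost gridTurn (b :: c :: rest) := Nat.add_comm _ _

theorem covering_walk_many_turns (V : Set (ℤ × ℤ)) (k : ℕ) (S : Finset (ℤ × ℤ))
    (hSV : ↑S ⊆ V) (hcard : S.card = k)
    (hdist : ∀ u ∈ S, ∀ v ∈ S, u ≠ v → u.1 ≠ v.1 ∧ u.2 ≠ v.2)
    (w : List (ℤ × ℤ)) (hw : w.Chain' gridAdj)
    (hin : ∀ v ∈ w, v ∈ V) (hcov : ∀ v ∈ V, v ∈ w) :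
    k - 1 ≤ turnCost gridTurn w := by
  have hSw : ∀ s ∈ S, s ∈ w := fun s hs => hcov s (hSV hs)
  match w with
  | [] =>
    have : S = ∅ := Finset.eq_empty_of_forall_notMem (fun s hs => by simpa using hSw s hs)
    simp [← hcard, this]
  | [a] =>
    have hk : k ≤ 1 := by
      rw [← hcard]
      apply Finset.card_le_one.mpr
      intro s hs t ht
      have := hSw s hs; have := hSw t ht
      simp_all
    omega
  | a :: b :: rest =>
    have hab : gridAdj a b := (List.isChain_cons_cons.mp hw).1
    have hsplit : S ⊆ S.filter (fun s => online a b s) ∪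
        S.filter (fun s => s ∈ (a :: b :: rest) ∧ ¬ online a b s) := by
      intro s hs
      simp only [Finset.mem_union, Finset.mem_filter]
      by_cases hon : online a b s
      · exact Or.inl ⟨hs, hon⟩
      · exact Or.inr ⟨hs, hSw s hs, hon⟩
    have hk : k ≤ 1 + turnCost gridTurn (a :: b :: rest) := by
      calc k = S.card := hcard.symm
        _ ≤ _ := Finset.card_le_card hsplit
        _ ≤ (S.filter (fun s => online a b s)).card +
            (S.filter (fun s => s ∈ (a :: b :: rest) ∧ ¬ online a b s)).card :=
              Finset.card_union_le _ _
        _ ≤ 1 + turnCost gridTurn (a :: b :: rest) :=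
              Nat.add_le_add (online_card S hdist hab) (aux S hdist rest a b hw)
    omega
end

section
/- Let D be a digraph with vertices s, t and let A be its arc set. If there is a directed path P from s to t in D such that every arc of D is either an arc of P or belongs to a strongly connected subdigraph of D containing a vertex of P, then there is a directed walk from s to t in D that traverses every arc of D (possibly with repetitions). -/
/-- `w` is a directed walk from `s` to `t` in the digraph with arc relation `A`. -/
def DWalkFromTo {V : Type*} (A : V → V → Prop) (w : List V) (s t : V) : Prop :=
  w.Chain' A ∧ w.head? = some s ∧ w.getLast? = some t

/-- The list of arcs (steps) traversed by a walk `w`. -/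
def steps {V : Type*} (w : List V) : List (V × V) := w.zip w.tail

/-- The subdigraph induced on `S` is strongly connected: any two vertices of `S`
are joined by a directed walk staying inside `S`. -/
def StrongConnOn {V : Type*} (A : V → V → Prop) (S : Set V) : Prop :=
  ∀ u ∈ S, ∀ v ∈ S, ∃ w : List V, DWalkFromTo A w u v ∧ ∀ x ∈ w, x ∈ S

/-!
Start from the path `p` itself. An arc `uv` not on `p` lies in a strongly connected `S` meeting
`p` at some `x`, so `x ⇝ u → v ⇝ x` is a closed walk; splicing it into the current walk at `x`
keeps the endpoints `s, t` and every vertex and arc already traversed, so `x` is still available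
for later arcs. Doing this once for each of the finitely many arcs gives the required walk.
-/

section Walks

variable {V : Type*} {A : V → V → Prop}

lemma steps_cons_cons (a b : V) (l : List V) :
    steps (a :: b :: l) = (a, b) :: steps (b :: l) := rfl

lemma isChain_iff_forall_mem_steps {w : List V} : w.IsChain A ↔ ∀ e ∈ steps w, A e.1 e.2 := by
  induction w using List.twoStepInduction with
  | nil | singleton => simp [steps]
  | cons_cons a b l _ ih =>
    rw [List.isChain_cons_cons, ih b, steps_cons_cons, List.forall_mem_cons]

lemma dWalkFromTo_iff {w : List V} {s t : V} : DWalkFromTo A w s t ↔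
    (∀ e ∈ steps w, A e.1 e.2) ∧ w.head? = some s ∧ w.getLast? = some t := by
  rw [DWalkFromTo, List.Chain', isChain_iff_forall_mem_steps]

lemma steps_append_tail : ∀ {w₁ w₂ : List V}, w₁.getLast? = w₂.head? →
    steps (w₁ ++ w₂.tail) = steps w₁ ++ steps w₂
  | [], [], _ => rfl
  | [a], b :: l, h => by cases Option.some.inj h; rfl
  | a :: b :: l, w₂, h => by
    rw [List.getLast?_cons_cons] at h
    rw [List.cons_append, List.cons_append, steps_cons_cons, ← List.cons_append,
      steps_append_tail h]
    rfl

lemma DWalkFromTo.steps_append_tail {w₁ w₂ : List V} {a b c : V} (h₁ : DWalkFromTo A w₁ a b)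
    (h₂ : DWalkFromTo A w₂ b c) : steps (w₁ ++ w₂.tail) = steps w₁ ++ steps w₂ :=
  _root_.steps_append_tail (h₁.2.2.trans h₂.2.1.symm)

lemma DWalkFromTo.append_tail {w₁ w₂ : List V} {a b c : V} (h₁ : DWalkFromTo A w₁ a b)
    (h₂ : DWalkFromTo A w₂ b c) : DWalkFromTo A (w₁ ++ w₂.tail) a c := by
  rw [dWalkFromTo_iff] at h₁ h₂ ⊢
  obtain ⟨hc₁, hh₁, hl₁⟩ := h₁
  obtain ⟨hc₂, hh₂, hl₂⟩ := h₂
  obtain _ | ⟨b', r⟩ := w₂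
  · simp at hh₂
  obtain rfl : b' = b := by simpa using hh₂
  refine ⟨?_, ?_, ?_⟩
  · rw [_root_.steps_append_tail (hl₁.trans hh₂.symm)]
    simpa [or_imp, forall_and] using And.intro hc₁ hc₂
  · rw [List.head?_append_of_ne_nil _ (by rintro rfl; simp at hh₁), hh₁]
  · cases r <;> simp_all

lemma DWalkFromTo.exists_split {w : List V} {s t x : V} (hw : DWalkFromTo A w s t) (hx : x ∈ w) :
    ∃ w₁ w₂, DWalkFromTo A w₁ s x ∧ DWalkFromTo A w₂ x t ∧ w = w₁ ++ w₂.tail := by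
  obtain ⟨l₁, l₂, rfl⟩ := List.append_of_mem hx
  have hsplit : l₁ ++ x :: l₂ = (l₁ ++ [x]) ++ (x :: l₂).tail := by simp
  have hsteps := _root_.steps_append_tail (w₁ := l₁ ++ [x]) (w₂ := x :: l₂) (by simp)
  obtain ⟨hc, hh, hl⟩ := dWalkFromTo_iff.1 hw
  rw [hsplit, hsteps] at hc
  rw [hsplit, List.head?_append_of_ne_nil _ (by simp)] at hh
  rw [List.getLast?_append_of_ne_nil _ (by simp)] at hl
  refine ⟨l₁ ++ [x], x :: l₂, ?_, ?_, hsplit⟩ <;> rw [dWalkFromTo_iff]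
  · exact ⟨fun e he => hc e (List.mem_append_left _ he), hh, by simp⟩
  · exact ⟨fun e he => hc e (List.mem_append_right _ he), by simp, hl⟩

lemma DWalkFromTo.exists_splice {w c : List V} {s t x : V} (hw : DWalkFromTo A w s t)
    (hx : x ∈ w) (hc : DWalkFromTo A c x x) :
    ∃ w', DWalkFromTo A w' s t ∧ w ⊆ w' ∧ steps w ⊆ steps w' ∧ steps c ⊆ steps w' := by
  obtain ⟨w₁, w₂, h₁, h₂, rfl⟩ := hw.exists_split hx
  have hc₂ := hc.append_tail h₂
  have hsteps : steps (w₁ ++ (c ++ w₂.tail).tail) = steps w₁ ++ (steps c ++ steps w₂) := by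
    rw [h₁.steps_append_tail hc₂, hc.steps_append_tail h₂]
  have hc_ne : c ≠ [] := by rintro rfl; simp [DWalkFromTo] at hc
  refine ⟨_, h₁.append_tail hc₂, ?_⟩
  rw [hsteps, h₁.steps_append_tail h₂, List.tail_append_of_ne_nil hc_ne]
  refine ⟨?_, ?_, ?_⟩ <;> intro y <;> simp only [List.mem_append] <;> tauto

lemma StrongConnOn.exists_closed_walk_through_arc {S : Set V} {u v x : V}
    (hS : StrongConnOn A S) (hx : x ∈ S) (hu : u ∈ S) (hv : v ∈ S) (huv : A u v) :
    ∃ c, DWalkFromTo A c x x ∧ (u, v) ∈ steps c := by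
  obtain ⟨c₁, h₁, -⟩ := hS x hx u hu
  obtain ⟨c₂, h₂, -⟩ := hS v hv x hx
  have harc : DWalkFromTo A [u, v] u v := by simp [dWalkFromTo_iff, steps, huv]
  have h₂' := harc.append_tail h₂
  refine ⟨_, h₁.append_tail h₂', ?_⟩
  rw [h₁.steps_append_tail h₂', harc.steps_append_tail h₂]
  simp [steps]

end Walks

section Covering

variable {V : Type*} {A : V → V → Prop} {s t : V} {p : List V}

lemma exists_walk_extending_through_arc {w : List V} {u v : V} (hw : DWalkFromTo A w s t)
    (hpw : p ⊆ w) (hsteps : steps p ⊆ steps w) (huv : A u v)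
    (h : (u, v) ∈ steps p ∨ ∃ S : Set V, u ∈ S ∧ v ∈ S ∧ StrongConnOn A S ∧ ∃ x ∈ S, x ∈ p) :
    ∃ w', DWalkFromTo A w' s t ∧ w ⊆ w' ∧ steps w ⊆ steps w' ∧ (u, v) ∈ steps w' := by
  rcases h with h | ⟨S, hu, hv, hS, x, hxS, hxp⟩
  · exact ⟨w, hw, List.Subset.refl _, List.Subset.refl _, hsteps h⟩
  obtain ⟨c, hc, hcuv⟩ := hS.exists_closed_walk_through_arc hxS hu hv huv
  obtain ⟨w', hw', hww', hsteps', hcw'⟩ := hw.exists_splice (hpw hxp) hc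
  exact ⟨w', hw', hww', hsteps', hcw' hcuv⟩

lemma exists_walk_covering (hp : DWalkFromTo A p s t)
    (hcov : ∀ u v, A u v → (u, v) ∈ steps p ∨
      ∃ S : Set V, u ∈ S ∧ v ∈ S ∧ StrongConnOn A S ∧ ∃ x ∈ S, x ∈ p)
    (L : List (V × V)) :
    ∃ w, DWalkFromTo A w s t ∧ p ⊆ w ∧ steps p ⊆ steps w ∧
      ∀ e ∈ L, A e.1 e.2 → e ∈ steps w := by
  induction L with
  | nil => exact ⟨p, hp, List.Subset.refl _, List.Subset.refl _, by simp⟩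
  | cons e L ih =>
    obtain ⟨w, hw, hpw, hsteps, hL⟩ := ih
    by_cases he : A e.1 e.2
    · obtain ⟨w', hw', hww', hsteps', he'⟩ :=
        exists_walk_extending_through_arc hw hpw hsteps he (hcov _ _ he)
      refine ⟨w', hw', List.Subset.trans hpw hww', List.Subset.trans hsteps hsteps', ?_⟩
      exact List.forall_mem_cons.2 ⟨fun _ => he', fun e' he'L hA => hsteps' (hL e' he'L hA)⟩
    · exact ⟨w, hw, hpw, hsteps, List.forall_mem_cons.2 ⟨fun h => absurd h he, hL⟩⟩

end Covering

theorem walkable_of_path_with_scc_general {V : Type*} [Fintype V] (A : V → V → Prop)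
    (s t : V) (p : List V) (hp : DWalkFromTo A p s t)
    (hcov : ∀ u v, A u v → (u, v) ∈ steps p ∨
      ∃ S : Set V, u ∈ S ∧ v ∈ S ∧ StrongConnOn A S ∧ ∃ x ∈ S, x ∈ p) :
    ∃ w : List V, DWalkFromTo A w s t ∧ ∀ u v, A u v → (u, v) ∈ steps w := by
  obtain ⟨w, hw, -, -, hcovers⟩ :=
    exists_walk_covering hp hcov (Finset.univ : Finset (V × V)).toList
  exact ⟨w, hw, fun u v huv => hcovers (u, v) (by simp) huv⟩

theorem walkable_of_path_with_scc {V : Type*} [Fintype V] (A : V → V → Prop)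
    (s t : V) (p : List V) (hp : DWalkFromTo A p s t) (hnd : p.Nodup)
    (hcov : ∀ u v, A u v → (u, v) ∈ steps p ∨
      ∃ S : Set V, u ∈ S ∧ v ∈ S ∧ StrongConnOn A S ∧ ∃ x ∈ S, x ∈ p) :
    ∃ w : List V, DWalkFromTo A w s t ∧ ∀ u v, A u v → (u, v) ∈ steps w :=
  walkable_of_path_with_scc_general A s t p hp hcov
end

section
/- Let G be a graph with a tree-decomposition (T, 𝒳) of width t and maximum degree at most d, and let H be a graph on a vertex set containing V(G) such that every vertex of H − V(G) is adjacent (in H) only to vertices of G, and every edge of H is contained in the closed neighborhood (in H) of some vertex of G. If each vertex of G has at most d neighbors in H outside V(G) and H restricted to V(G) has no edges outside those induced by G's adjacency via these subdivision vertices, then replacing each bag B of 𝒳 by the union of the closed H-neighborhoods of the vertices of B yields a tree-decomposition of H. In particular, if G has treewidth at most t and maximum degree at most d, the graph M(G) obtained by subdividing every edge of G twice has treewidth at most (t+1)(2d+1) − 1. -/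
/-!
For a vertex `w` of `H`, the nodes whose new bag contains `w` form the union of the subtrees
`{i | v ∈ X i}` over the vertices `v` of `G` whose closed neighbourhood contains `w`. All these
`v` are equal or adjacent in `G` to one of them, `v₀`, so each of their subtrees meets that of
`v₀`, and the union is again a subtree.

For the double subdivision, `v` is expanded to `v` together with the (at most `2d`) subdivision
vertices on the edges at `v`. The vertex type of `doubleSubdiv G` also contains isolated pairs
that are not subdivision vertices; they get leaf bags of their own. A finite subtree containing
a bag for every vertex and every edge carries the whole decomposition, so the index set can be
taken finite.
-/

/-- `(T, X)` is a tree-decomposition of the graph `H`: `T` is a tree, every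
vertex is in some bag, every edge has both endpoints in a common bag, and the
bags containing any fixed vertex induce a connected (hence nonempty) subtree. -/
def IsTreeDecomp {V ι : Type*} (H : SimpleGraph V) (T : SimpleGraph ι)
    (X : ι → Set V) : Prop :=
  T.IsTree ∧ (∀ v, ∃ i, v ∈ X i) ∧
  (∀ u v, H.Adj u v → ∃ i, u ∈ X i ∧ v ∈ X i) ∧
  ∀ v : V, (T.induce {i | v ∈ X i}).Connected

/-- The graph obtained from `G` by subdividing every edge twice: each edge
`e = uv` is replaced by a path `u – (e,u) – (e,v) – v` with two new vertices. -/
def doubleSubdiv {V : Type*} (G : SimpleGraph V) :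
    SimpleGraph (V ⊕ (Sym2 V × V)) where
  Adj a b :=
    match a, b with
    | Sum.inl u, Sum.inr (e, x) => e ∈ G.edgeSet ∧ x = u ∧ u ∈ e
    | Sum.inr (e, x), Sum.inl u => e ∈ G.edgeSet ∧ x = u ∧ u ∈ e
    | Sum.inr (e, x), Sum.inr (e', x') =>
        e = e' ∧ e ∈ G.edgeSet ∧ x ≠ x' ∧ x ∈ e ∧ x' ∈ e
    | _, _ => False
  symm := by
    constructor
    rintro (u | ⟨e, x⟩) (v | ⟨e', x'⟩) h
    · exact h.elim
    · exact h
    · exact h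
    · obtain ⟨rfl, he, hne, hx, hx'⟩ := h
      exact ⟨rfl, he, Ne.symm hne, hx', hx⟩
  loopless := by
    constructor
    rintro (u | ⟨e, x⟩) h <;> simp_all

open SimpleGraph

namespace SimpleGraph

variable {α β : Type*} {T : SimpleGraph α}

lemma Connected.exists_path_support_subset {A : Set α} (hA : (T.induce A).Connected)
    {x y : α} (hx : x ∈ A) (hy : y ∈ A) :
    ∃ p : T.Path x y, ∀ z ∈ p.1.support, z ∈ A := by
  classical
  obtain ⟨w⟩ := hA.preconnected ⟨x, hx⟩ ⟨y, hy⟩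
  refine ⟨(w.map (Embedding.induce A).toHom).toPath, fun z hz => ?_⟩
  obtain ⟨z', -, rfl⟩ := List.mem_map.mp
    (Walk.support_map _ _ ▸ Walk.support_bypass_subset_support _ hz)
  exact z'.2

lemma IsAcyclic.induce_inter_connected (hT : T.IsAcyclic) {A B : Set α}
    (hA : (T.induce A).Connected) (hB : (T.induce B).Connected) (hAB : (A ∩ B).Nonempty) :
    (T.induce (A ∩ B)).Connected := by
  have : Nonempty (A ∩ B : Set α) := hAB.to_subtype
  refine ⟨fun ⟨x, hxA, hxB⟩ ⟨y, hyA, hyB⟩ => ?_⟩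
  obtain ⟨p, hpA⟩ := hA.exists_path_support_subset hxA hyA
  obtain ⟨q, hqB⟩ := hB.exists_path_support_subset hxB hyB
  rw [(hT.subsingleton_path x y).elim q p] at hqB
  exact ⟨p.1.induce (A ∩ B) fun z hz => ⟨hpA z hz, hqB z hz⟩⟩

def attachLeaves (T : SimpleGraph α) (r : α) (β : Type*) : SimpleGraph (α ⊕ β) where
  Adj
    | .inl a, .inl a' => T.Adj a a'
    | .inl a, .inr _ => a = r
    | .inr _, .inl a => a = r
    | .inr _, .inr _ => False
  symm := by
    constructor
    rintro (a | b) (a' | b') h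
    exacts [h.symm, h, h, h]
  loopless := by
    constructor
    rintro (a | b) h
    exacts [T.loopless.irrefl a h, h]

variable {r : α}

def inlAttachLeaves : T ↪g T.attachLeaves r β where
  toEmbedding := .inl
  map_rel_iff' := Iff.rfl

lemma attachLeaves_adj_inr {b : β} {x : α ⊕ β} (h : (T.attachLeaves r β).Adj (.inr b) x) :
    x = .inl r := by
  cases x with
  | inl a => exact congrArg Sum.inl h
  | inr => exact h.elim

lemma IsTree.attachLeaves (hT : T.IsTree) : (T.attachLeaves r β).IsTree := by
  have hreach : ∀ x, (T.attachLeaves r β).Reachable x (.inl r) := by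
    rintro (a | b)
    · exact (hT.connected.preconnected a r).map inlAttachLeaves.toHom
    · exact Adj.reachable (show r = r from rfl)
  have : Nonempty (α ⊕ β) := ⟨.inl r⟩
  refine ⟨⟨fun x y => (hreach x).trans (hreach y).symm⟩, fun x c hc => ?_⟩
  classical
  -- on a cycle through a leaf, both neighbours of the leaf would be `r`
  have hleaf : ∀ b, Sum.inr b ∉ c.support := by
    intro b hb
    have hc' := hc.rotate hb
    exact hc'.snd_ne_penultimate ((attachLeaves_adj_inr (Walk.adj_snd hc'.not_nil)).trans
      (attachLeaves_adj_inr (Walk.adj_penultimate hc'.not_nil).symm).symm)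
  have hsupp : ∀ y ∈ c.support, y ∈ Set.range Sum.inl := by
    rintro (a | b) hy
    exacts [⟨a, rfl⟩, (hleaf b hy).elim]
  have hacyc : ((T.attachLeaves r β).induce (Set.range Sum.inl)).IsAcyclic :=
    inlAttachLeaves.isoInduceRange.isAcyclic_iff.mp hT.isAcyclic
  refine hacyc (c.induce _ hsupp) ?_
  exact (Walk.isCycle_map_iff_of_injective
    (Embedding.induce (G := T.attachLeaves r β) _).injective).mp (by rwa [Walk.map_induce])

end SimpleGraph

lemma Set.ncard_biUnion_le_mul {ι α : Type*} {s : Set ι} (hs : s.Finite) {f : ι → Set α}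
    {c : ℕ} (hf : ∀ i ∈ s, (f i).ncard ≤ c) : (⋃ i ∈ s, f i).ncard ≤ s.ncard * c := by
  lift s to Finset ι using hs
  calc _ ≤ ∑ i ∈ s, (f i).ncard := by simpa using s.set_ncard_biUnion_le f
    _ ≤ s.card * c := Finset.sum_le_card_nsmul _ _ _ hf
    _ = _ := by rw [Set.ncard_coe_finset]

section TreeDecomp

variable {V W ι κ : Type*} {G : SimpleGraph V} {T : SimpleGraph ι} {X : ι → Set V}

lemma isTreeDecomp_unit_univ (G : SimpleGraph V) :
    IsTreeDecomp G (⊥ : SimpleGraph Unit) (fun _ => Set.univ) :=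
  ⟨.of_subsingleton, fun _ => ⟨(), trivial⟩, fun _ _ _ => ⟨(), trivial, trivial⟩,
    fun _ => (connected_iff _).mpr ⟨.of_subsingleton, ⟨(), trivial⟩⟩⟩

lemma IsTreeDecomp.comap_iso (htd : IsTreeDecomp G T X) {T' : SimpleGraph κ} (φ : T' ≃g T) :
    IsTreeDecomp G T' (fun k => X (φ k)) := by
  obtain ⟨hT, hcov, hedge, hconn⟩ := htd
  refine ⟨φ.isTree_iff.mpr hT, fun v => ?_, fun u v huv => ?_, fun v => ?_⟩
  · obtain ⟨i, hi⟩ := hcov v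
    exact ⟨φ.symm i, by simpa using hi⟩
  · obtain ⟨i, hu, hv⟩ := hedge u v huv
    exact ⟨φ.symm i, by simpa using hu, by simpa using hv⟩
  · refine (hconn v).map (induceHom φ.symm.toHom fun i hi => by simpa using hi) ?_
    rintro ⟨k, hk⟩
    exact ⟨⟨φ k, hk⟩, Subtype.ext (φ.symm_apply_apply k)⟩

lemma IsTreeDecomp.induce (htd : IsTreeDecomp G T X) {S : Set ι} (hS : (T.induce S).Connected)
    (hcov : ∀ v, ∃ i ∈ S, v ∈ X i)
    (hedge : ∀ u v, G.Adj u v → ∃ i ∈ S, u ∈ X i ∧ v ∈ X i) :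
    IsTreeDecomp G (T.induce S) (fun i => X i) := by
  refine ⟨⟨hS, htd.1.isAcyclic.induce S⟩, fun v => ?_, fun u v huv => ?_, fun v => ?_⟩
  · obtain ⟨i, hiS, hi⟩ := hcov v
    exact ⟨⟨i, hiS⟩, hi⟩
  · obtain ⟨i, hiS, hu, hv⟩ := hedge u v huv
    exact ⟨⟨i, hiS⟩, hu, hv⟩
  · obtain ⟨i, hiS, hi⟩ := hcov v
    have hSv := htd.1.isAcyclic.induce_inter_connected hS (htd.2.2.2 v) ⟨i, hiS, hi⟩
    refine hSv.map ⟨fun i => ⟨⟨i.1, i.2.1⟩, i.2.2⟩, id⟩ ?_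
    rintro ⟨⟨i, hiS⟩, hi⟩
    exact ⟨⟨i, hiS, hi⟩, rfl⟩

lemma IsTreeDecomp.exists_fin [Finite V] (htd : IsTreeDecomp G T X) :
    ∃ (n : ℕ) (T' : SimpleGraph (Fin n)) (g : Fin n → ι),
      IsTreeDecomp G T' (fun k => X (g k)) := by
  classical
  have := Fintype.ofFinite V
  have ⟨hT, hcov, hedge, _⟩ := htd
  choose vertexBag hvertexBag using hcov
  choose edgeBag hedgeBag using fun p : {p : V × V // G.Adj p.1 p.2} => hedge _ _ p.2
  obtain ⟨r⟩ := hT.connected.nonempty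
  obtain ⟨S, hS₀, hS⟩ := extend_finset_to_connected hT.connected.preconnected
    (t := insert r (Finset.univ.image vertexBag ∪ Finset.univ.image edgeBag)) (by simp)
  have hD := htd.induce hS
    (fun v => ⟨vertexBag v, hS₀ (by simp), hvertexBag v⟩)
    (fun u v huv => ⟨edgeBag ⟨(u, v), huv⟩, hS₀ (by simp), hedgeBag ⟨(u, v), huv⟩⟩)
  exact ⟨_, _, _, hD.comap_iso (Iso.comap S.equivFin.symm _)⟩

lemma IsTreeDecomp.sum_bot (htd : IsTreeDecomp G T X) (r : ι) (β : Type*) :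
    IsTreeDecomp (G ⊕g (⊥ : SimpleGraph β)) (T.attachLeaves r β)
      (Sum.elim (fun i => Sum.inl '' X i) (fun b => {Sum.inr b})) := by
  obtain ⟨hT, hcov, hedge, hconn⟩ := htd
  refine ⟨hT.attachLeaves, ?_, ?_, ?_⟩
  · rintro (v | b)
    · obtain ⟨i, hi⟩ := hcov v
      exact ⟨.inl i, Set.mem_image_of_mem _ hi⟩
    · exact ⟨.inr b, rfl⟩
  · rintro (u | b) (v | b') h <;> simp only [sum_adj, bot_adj] at h
    obtain ⟨i, hu, hv⟩ := hedge u v h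
    exact ⟨.inl i, Set.mem_image_of_mem _ hu, Set.mem_image_of_mem _ hv⟩
  · rintro (v | b)
    · refine (hconn v).map ⟨fun i => ⟨.inl i.1, Set.mem_image_of_mem _ i.2⟩, id⟩ ?_
      rintro ⟨i | b, hi⟩
      · exact ⟨⟨i, by simpa using hi⟩, rfl⟩
      · simp at hi
    · have hleaf : {k | Sum.inr b ∈ Sum.elim (fun i => Sum.inl '' X i)
          (fun b => ({Sum.inr b} : Set (V ⊕ β))) k} = {.inr b} := by
        ext (i | b') <;> simp [eq_comm]
      rw [hleaf]
      exact ⟨.of_subsingleton⟩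

lemma IsTreeDecomp.expand (htd : IsTreeDecomp G T X) {H : SimpleGraph W} (N : V → Set W)
    (hcenter : ∀ w, ∃ v₀, w ∈ N v₀ ∧ ∀ v, w ∈ N v → v = v₀ ∨ G.Adj v v₀)
    (hedge : ∀ a b, H.Adj a b → ∃ v, a ∈ N v ∧ b ∈ N v) :
    IsTreeDecomp H T (fun i => ⋃ v ∈ X i, N v) := by
  obtain ⟨hT, hcov, hadj, hconn⟩ := htd
  refine ⟨hT, fun w => ?_, fun a b hab => ?_, fun w => ?_⟩
  · obtain ⟨v, hv, -⟩ := hcenter w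
    obtain ⟨i, hi⟩ := hcov v
    exact ⟨i, Set.mem_biUnion hi hv⟩
  · obtain ⟨v, ha, hb⟩ := hedge a b hab
    obtain ⟨i, hi⟩ := hcov v
    exact ⟨i, Set.mem_biUnion hi ha, Set.mem_biUnion hi hb⟩
  · obtain ⟨v₀, hv₀, hstar⟩ := hcenter w
    obtain ⟨i₀, hi₀⟩ := hcov v₀
    refine T.induce_connected_of_patches i₀ (Set.mem_biUnion hi₀ hv₀) fun {k} hk => ?_
    obtain ⟨v, hvk, hv⟩ := Set.mem_iUnion₂.mp hk
    have hmeet : ({i | v₀ ∈ X i} ∩ {i | v ∈ X i}).Nonempty := by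
      rcases hstar v hv with rfl | h
      · exact ⟨i₀, hi₀, hi₀⟩
      · obtain ⟨j, hj, hj₀⟩ := hadj v v₀ h
        exact ⟨j, hj₀, hj⟩
    refine ⟨_, ?_, Or.inl hi₀, Or.inr hvk, (induce_union_connected (hconn v₀).preconnected
      (hconn v).preconnected hmeet).preconnected _ _⟩
    rintro j (hj | hj)
    exacts [Set.mem_biUnion hj hv₀, Set.mem_biUnion hj hv]

end TreeDecomp

section DoubleSubdiv

variable {V : Type*} (G : SimpleGraph V)

/-- The pairs `(e, x)` that are not subdivision vertices; they are isolated in `doubleSubdiv G`. -/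
abbrev DoubleSubdivJunk : Type _ := {p : Sym2 V × V // ¬(p.1 ∈ G.edgeSet ∧ p.2 ∈ p.1)}

/-- Taking all subdivision vertices on the edges at `v`, not just the neighbours of `v`, puts the
middle edge of each subdivided path into one of these sets. -/
def doubleSubdivNbhd : V ⊕ DoubleSubdivJunk G → Set (V ⊕ (Sym2 V × V))
  | .inl v => insert (.inl v) (.inr '' {p | p.1 ∈ G.incidenceSet v ∧ p.2 ∈ p.1})
  | .inr j => {.inr j.1}

variable {G}

lemma exists_mem_doubleSubdivNbhd_of_adj {a b : V ⊕ (Sym2 V × V)}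
    (h : (doubleSubdiv G).Adj a b) :
    ∃ x, a ∈ doubleSubdivNbhd G x ∧ b ∈ doubleSubdivNbhd G x := by
  rcases a with u | ⟨e, x⟩ <;> rcases b with u' | ⟨e', x'⟩
  · exact h.elim
  · obtain ⟨he, rfl, hu⟩ := h
    exact ⟨.inl x', by simp [doubleSubdivNbhd],
      by simp [doubleSubdivNbhd, incidenceSet, he, hu]⟩
  · obtain ⟨he, rfl, hu⟩ := h
    exact ⟨.inl x, by simp [doubleSubdivNbhd, incidenceSet, he, hu],
      by simp [doubleSubdivNbhd]⟩
  · obtain ⟨rfl, he, -, hx, hx'⟩ := h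
    exact ⟨.inl x, by simp [doubleSubdivNbhd, incidenceSet, he, hx],
      by simp [doubleSubdivNbhd, incidenceSet, he, hx, hx']⟩

lemma exists_center_doubleSubdivNbhd (w : V ⊕ (Sym2 V × V)) :
    ∃ x₀, w ∈ doubleSubdivNbhd G x₀ ∧ ∀ x, w ∈ doubleSubdivNbhd G x →
      x = x₀ ∨ (G ⊕g (⊥ : SimpleGraph (DoubleSubdivJunk G))).Adj x x₀ := by
  rcases w with v | p
  · refine ⟨.inl v, by simp [doubleSubdivNbhd], ?_⟩
    rintro (v' | j) h
    · obtain rfl : v = v' := by simpa [doubleSubdivNbhd] using h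
      exact .inl rfl
    · simp [doubleSubdivNbhd] at h
  · by_cases hp : p.1 ∈ G.edgeSet ∧ p.2 ∈ p.1
    · refine ⟨.inl p.2, by simp [doubleSubdivNbhd, incidenceSet, hp], ?_⟩
      rintro (v | j) h
      · obtain ⟨⟨-, hv⟩, -⟩ : p.1 ∈ G.incidenceSet v ∧ p.2 ∈ p.1 := by
          simpa [doubleSubdivNbhd] using h
        simpa [or_iff_not_imp_left] using
          fun hne => adj_iff_exists_edge.mpr ⟨hne, p.1, hp.1, hv, hp.2⟩
      · obtain rfl : p = j.1 := by simpa [doubleSubdivNbhd] using h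
        exact (j.2 hp).elim
    · refine ⟨.inr ⟨p, hp⟩, rfl, ?_⟩
      rintro (v | j) h
      · obtain ⟨⟨he, -⟩, hp₂⟩ : p.1 ∈ G.incidenceSet v ∧ p.2 ∈ p.1 := by
          simpa [doubleSubdivNbhd] using h
        exact (hp ⟨he, hp₂⟩).elim
      · obtain rfl : p = j.1 := by simpa [doubleSubdivNbhd] using h
        exact .inl rfl

lemma ncard_incidentPairs_le [Finite V] (v : V) :
    {p : Sym2 V × V | p.1 ∈ G.incidenceSet v ∧ p.2 ∈ p.1}.ncard ≤
      2 * (G.neighborSet v).ncard := by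
  have hsub : {p : Sym2 V × V | p.1 ∈ G.incidenceSet v ∧ p.2 ∈ p.1} ⊆
      (fun w => (s(v, w), v)) '' G.neighborSet v ∪
        (fun w => (s(v, w), w)) '' G.neighborSet v := by
    rintro ⟨e, x⟩ ⟨⟨he, hv⟩, hx : x ∈ e⟩
    obtain ⟨w, rfl⟩ := Sym2.mem_iff_exists.mp hv
    rcases Sym2.mem_iff.mp hx with rfl | rfl
    exacts [.inl ⟨_, he, rfl⟩, .inr ⟨_, he, rfl⟩]
  calc _ ≤ _ := Set.ncard_le_ncard hsub
    _ ≤ _ := Set.ncard_union_le _ _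
    _ ≤ (G.neighborSet v).ncard + (G.neighborSet v).ncard :=
      add_le_add (Set.ncard_image_le (Set.toFinite _)) (Set.ncard_image_le (Set.toFinite _))
    _ = _ := (two_mul _).symm

lemma ncard_doubleSubdivNbhd_le [Finite V] {d : ℕ} (hdeg : ∀ v, (G.neighborSet v).ncard ≤ d)
    (x : V ⊕ DoubleSubdivJunk G) : (doubleSubdivNbhd G x).ncard ≤ 2 * d + 1 := by
  rcases x with v | j
  · calc _ ≤ _ := Set.ncard_insert_le _ _
      _ ≤ {p : Sym2 V × V | p.1 ∈ G.incidenceSet v ∧ p.2 ∈ p.1}.ncard + 1 :=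
        Nat.add_le_add_right (Set.ncard_image_le (Set.toFinite _)) 1
      _ ≤ 2 * d + 1 := by linarith [ncard_incidentPairs_le (G := G) v, hdeg v]
  · simp [doubleSubdivNbhd]

end DoubleSubdiv

theorem exists_isTreeDecomp_doubleSubdiv {V ι : Type*} {G : SimpleGraph V}
    {T : SimpleGraph ι} {X : ι → Set V} {t d : ℕ} (htd : IsTreeDecomp G T X)
    (hwidth : ∀ i, (X i).ncard ≤ t + 1) (hdeg : ∀ v, (G.neighborSet v).ncard ≤ d) :
    ∃ (κ : Type) (T' : SimpleGraph κ) (X' : κ → Set (V ⊕ (Sym2 V × V))),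
      IsTreeDecomp (doubleSubdiv G) T' X' ∧ ∀ i, (X' i).ncard ≤ (t + 1) * (2 * d + 1) := by
  rcases finite_or_infinite V with hV | hV
  swap
  · -- `ncard` of an infinite set is `0`
    exact ⟨Unit, ⊥, _, isTreeDecomp_unit_univ _, fun _ => by simp⟩
  obtain ⟨r⟩ := htd.1.connected.nonempty
  have hD := (htd.sum_bot r (DoubleSubdivJunk G)).expand (doubleSubdivNbhd G)
    exists_center_doubleSubdivNbhd fun _ _ => exists_mem_doubleSubdivNbhd_of_adj
  obtain ⟨n, T', g, hD'⟩ := hD.exists_fin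
  refine ⟨Fin n, T', _, hD', fun k => ?_⟩
  have hbag : ∀ k, (Sum.elim (fun i => Sum.inl '' X i)
      (fun j => ({Sum.inr j} : Set (V ⊕ DoubleSubdivJunk G))) k).ncard ≤ t + 1 := by
    rintro (i | j)
    · simpa [Set.ncard_image_of_injective _ Sum.inl_injective] using hwidth i
    · simp
  calc _ ≤ _ * (2 * d + 1) :=
        Set.ncard_biUnion_le_mul (Set.toFinite _) fun x _ => ncard_doubleSubdivNbhd_le hdeg x
    _ ≤ _ := Nat.mul_le_mul_right _ (hbag (g k))

lemma exists_center_closedNbhd {V U : Type*} {G : SimpleGraph V} {H : SimpleGraph U}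
    {f : V → U} (hinj : f.Injective) (hcover : ∀ u, u ∉ Set.range f → ∃ v, H.Adj (f v) u)
    (hGedges : ∀ u v, H.Adj (f u) (f v) → G.Adj u v)
    (hcommon : ∀ v₁ v₂ u, u ∉ Set.range f → H.Adj (f v₁) u → H.Adj (f v₂) u →
      v₁ = v₂ ∨ G.Adj v₁ v₂) (u : U) :
    ∃ v₀, u ∈ {w | w = f v₀ ∨ H.Adj (f v₀) w} ∧
      ∀ v, u ∈ {w | w = f v ∨ H.Adj (f v) w} → v = v₀ ∨ G.Adj v v₀ := by
  by_cases hu : u ∈ Set.range f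
  · obtain ⟨v₀, rfl⟩ := hu
    refine ⟨v₀, .inl rfl, ?_⟩
    rintro v (h | h)
    exacts [.inl (hinj h).symm, .inr (hGedges v v₀ h)]
  · obtain ⟨v₀, hv₀⟩ := hcover u hu
    refine ⟨v₀, .inr hv₀, ?_⟩
    rintro v (rfl | h)
    exacts [(hu ⟨v, rfl⟩).elim, hcommon v v₀ u hu h hv₀]

theorem treeDecomp_of_neighborhood_expansion_general
    {V U ι : Type*} (G : SimpleGraph V) (T : SimpleGraph ι) (X : ι → Set V)
    (t d : ℕ)
    -- `(T, X)` is a tree-decomposition of `G` of width `t`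
    (htd : IsTreeDecomp G T X) (hwidth : ∀ i, (X i).ncard ≤ t + 1)
    -- `G` has maximum degree at most `d`
    (hdeg : ∀ v : V, (G.neighborSet v).ncard ≤ d)
    -- `H` is a graph on a vertex set containing `V(G)` (via the injection `f`)
    (H : SimpleGraph U) (f : V → U) (hinj : Function.Injective f)
    -- every vertex of `H − V(G)` is adjacent in `H` to some vertex of `G`
    (hcover : ∀ u : U, u ∉ Set.range f → ∃ v, H.Adj (f v) u)
    -- every edge of `H` is contained in the closed `H`-neighborhood of some vertex of `G`
    (hedge : ∀ a b, H.Adj a b →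
      ∃ v, (a = f v ∨ H.Adj (f v) a) ∧ (b = f v ∨ H.Adj (f v) b))
    -- `H` restricted to `V(G)` has no edges beyond those coming from `G`'s adjacency
    (hGedges : ∀ u v, H.Adj (f u) (f v) → G.Adj u v)
    (hcommon : ∀ v₁ v₂ u, u ∉ Set.range f → H.Adj (f v₁) u → H.Adj (f v₂) u →
      v₁ = v₂ ∨ G.Adj v₁ v₂) :
    -- replacing each bag by the union of closed `H`-neighborhoods gives a
    -- tree-decomposition of `H`
    IsTreeDecomp H T (fun i => ⋃ v ∈ X i, {u | u = f v ∨ H.Adj (f v) u}) ∧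
    -- in particular, the double subdivision of `G` has treewidth at most
    -- `(t+1)(2d+1) − 1`
    ∃ (κ : Type) (T' : SimpleGraph κ) (X' : κ → Set (V ⊕ (Sym2 V × V))),
      IsTreeDecomp (doubleSubdiv G) T' X' ∧
      ∀ i, (X' i).ncard ≤ (t + 1) * (2 * d + 1) :=
  ⟨htd.expand _ (exists_center_closedNbhd hinj hcover hGedges hcommon) hedge,
    exists_isTreeDecomp_doubleSubdiv htd hwidth hdeg⟩

theorem treeDecomp_of_neighborhood_expansion
    {V U ι : Type*} (G : SimpleGraph V) (T : SimpleGraph ι) (X : ι → Set V)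
    (t d : ℕ)
    -- `(T, X)` is a tree-decomposition of `G` of width `t`
    (htd : IsTreeDecomp G T X) (hwidth : ∀ i, (X i).ncard ≤ t + 1)
    -- `G` has maximum degree at most `d`
    (hdeg : ∀ v : V, (G.neighborSet v).ncard ≤ d)
    -- `H` is a graph on a vertex set containing `V(G)` (via the injection `f`)
    (H : SimpleGraph U) (f : V → U) (hinj : Function.Injective f)
    -- every vertex of `H − V(G)` is adjacent in `H` only to vertices of `G`
    (hout : ∀ u : U, u ∉ Set.range f → ∀ w, H.Adj u w → w ∈ Set.range f)
    -- every vertex of `H − V(G)` is adjacent in `H` to some vertex of `G`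
    (hcover : ∀ u : U, u ∉ Set.range f → ∃ v, H.Adj (f v) u)
    -- every edge of `H` is contained in the closed `H`-neighborhood of some vertex of `G`
    (hedge : ∀ a b, H.Adj a b →
      ∃ v, (a = f v ∨ H.Adj (f v) a) ∧ (b = f v ∨ H.Adj (f v) b))
    -- each vertex of `G` has at most `d` `H`-neighbors outside `V(G)`
    (houtdeg : ∀ v, {u | H.Adj (f v) u ∧ u ∉ Set.range f}.ncard ≤ d)
    -- `H` restricted to `V(G)` has no edges beyond those coming from `G`'s adjacency
    (hGedges : ∀ u v, H.Adj (f u) (f v) → G.Adj u v)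
    (hcommon : ∀ v₁ v₂ u, u ∉ Set.range f → H.Adj (f v₁) u → H.Adj (f v₂) u →
      v₁ = v₂ ∨ G.Adj v₁ v₂) :
    -- replacing each bag by the union of closed `H`-neighborhoods gives a
    -- tree-decomposition of `H`
    IsTreeDecomp H T (fun i => ⋃ v ∈ X i, {u | u = f v ∨ H.Adj (f v) u}) ∧
    -- in particular, the double subdivision of `G` has treewidth at most
    -- `(t+1)(2d+1) − 1`
    ∃ (κ : Type) (T' : SimpleGraph κ) (X' : κ → Set (V ⊕ (Sym2 V × V))),
      IsTreeDecomp (doubleSubdiv G) T' X' ∧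
      ∀ i, (X' i).ncard ≤ (t + 1) * (2 * d + 1) :=
  treeDecomp_of_neighborhood_expansion_general G T X t d htd hwidth hdeg H f hinj hcover hedge
    hGedges hcommon
end

section
/- For every k ≥ 1, the treewidth of the (k × k)-grid graph is at least k − 1 (in fact exactly k for k ≥ 2). -/
/-- The treewidth of a (finite) graph `G`: the least `w` admitting a
tree-decomposition with all bags of size at most `w + 1`. -/
noncomputable def treewidth {V : Type*} (G : SimpleGraph V) : ℕ :=
  sInf {w | ∃ (m : ℕ) (T : SimpleGraph (Fin m)) (X : Fin m → Set V),
    IsTreeDecomp G T X ∧ ∀ i, (X i).ncard ≤ w + 1}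

/-- The `(k × k)`-grid graph on `{1,…,k} × {1,…,k}` (modelled by `Fin k × Fin k`):
vertices at Euclidean distance 1 are adjacent. -/
def gridGraph (k : ℕ) : SimpleGraph (Fin k × Fin k) where
  Adj u v := (u.1 = v.1 ∧ |(u.2.val : ℤ) - (v.2.val : ℤ)| = 1) ∨
             (u.2 = v.2 ∧ |(u.1.val : ℤ) - (v.1.val : ℤ)| = 1)
  symm := by
    constructor
    rintro u v (⟨h1, h2⟩ | ⟨h1, h2⟩)
    · exact Or.inl ⟨h1.symm, by rwa [abs_sub_comm]⟩
    · exact Or.inr ⟨h1.symm, by rwa [abs_sub_comm]⟩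
  loopless := ⟨by rintro u (⟨-, h⟩ | ⟨-, h⟩) <;> simp at h⟩

/-!
Upper bound: listed row by row, adjacent vertices of the `k × k` grid are at most `k` apart, so
the windows of `k + 1` consecutive vertices are the bags of a path decomposition of width `k`.

Lower bound: for any tree decomposition, some bag meets every set of a bramble (orient each tree
edge `st` towards the side holding a bramble set that misses `X s ∩ X t`; a sink of this
orientation is such a bag). The crosses of the top-left `(k - 1) × (k - 1)` subgrid, the last row
and the rest of the last column form a bramble. A set meeting all of them meets every inner row or
every inner column, and also the last row and the last column, so it has at least `k + 1` vertices.
-/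

open SimpleGraph

namespace SimpleGraph

variable {V W : Type*} {G : SimpleGraph V}

theorem Reachable.mem_of_forall_adj {S : Set V} (hS : ∀ a b, G.Adj a b → a ∈ S → b ∈ S)
    {u v : V} (huv : G.Reachable u v) (hu : u ∈ S) : v ∈ S := by
  obtain ⟨p⟩ := huv
  by_contra hv
  obtain ⟨d, -, hd, hd'⟩ := p.exists_boundary_dart S hu hv
  exact hd' (hS _ _ d.adj hd)

theorem Connected.induce_range {H : SimpleGraph W} (hG : G.Connected) (f : G →g H) :
    (H.induce (Set.range f)).Connected :=
  hG.map ⟨fun v ↦ ⟨f v, v, rfl⟩, fun h ↦ f.map_adj h⟩ fun ⟨_, v, rfl⟩ ↦ ⟨v, rfl⟩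

theorem IsTree.exists_forall_adj_imp [Finite V] (hG : G.IsTree) (R : V → V → Prop)
    (hR : ∀ s t, G.Adj s t → R s t ∨ R t s) : ∃ t, ∀ s, G.Adj s t → R s t := by
  classical
  by_contra! h
  choose g hg hgR using h
  have : Fintype V := Fintype.ofFinite V
  -- without a sink, `t ↦ s(t, g t)` injects the vertices into the edges of the tree
  have hinj : Set.InjOn (fun t ↦ s(t, g t)) (Finset.univ : Finset V) := by
    intro a _ b _ hab
    rcases Sym2.eq_iff.1 hab with ⟨h, -⟩ | ⟨h, h'⟩
    · exact h
    · have hab : G.Adj a b := h ▸ hg b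
      have hnab : ¬R a b := h ▸ hgR b
      have hnba : ¬R b a := h' ▸ hgR a
      exact ((hR a b hab).elim hnab hnba).elim
  have hcard := Finset.card_le_card_of_injOn _ (fun t _ ↦ mem_edgeFinset.2 (hg t).symm) hinj
  have := hG.card_edgeFinset
  simp only [Finset.card_univ] at hcard
  omega

def side (G : SimpleGraph V) (s t : V) : Set V :=
  {i | (G.deleteEdges {s(s, t)}).Reachable s i}

variable {s t : V}

theorem mem_side_self (s t : V) : s ∈ G.side s t :=
  Reachable.refl s

theorem mem_side_of_adj {i j : V} (hij : G.Adj i j) (hne : s(i, j) ≠ s(s, t))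
    (hi : i ∈ G.side s t) : j ∈ G.side s t :=
  hi.trans (Adj.reachable (by simp [hij, hne]))

theorem mem_side_of_walk {a b : V} (p : G.Walk a b) (hp : s(s, t) ∉ p.edges)
    (ha : a ∈ G.side s t) : b ∈ G.side s t :=
  ha.trans ⟨p.toDeleteEdge _ hp⟩

theorem IsTree.not_mem_side_swap (hG : G.IsTree) (hst : G.Adj s t) {i : V}
    (hi : i ∈ G.side s t) : i ∉ G.side t s := by
  intro hi'
  have hb := isAcyclic_iff_forall_adj_isBridge.1 hG.isAcyclic hst
  rw [isBridge_iff] at hb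
  rw [side, Sym2.eq_swap] at hi'
  exact hb (hi.trans hi'.symm)

theorem IsTree.mem_side_or_mem_side (hG : G.IsTree) (i : V) :
    i ∈ G.side s t ∨ i ∈ G.side t s := by
  refine (hG.connected.preconnected s i).mem_of_forall_adj (S := G.side s t ∪ G.side t s) ?_
    (Or.inl (mem_side_self s t))
  intro a b hab ha
  by_cases he : s(a, b) = s(s, t)
  · rcases Sym2.eq_iff.1 he with ⟨-, rfl⟩ | ⟨-, rfl⟩
    exacts [Or.inr (mem_side_self _ _), Or.inl (mem_side_self _ _)]
  · exact ha.imp (mem_side_of_adj hab he) (mem_side_of_adj hab (by rwa [Sym2.eq_swap (a := t)]))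

theorem IsTree.exists_adj_mem_side (hG : G.IsTree) {r : V} (hr : r ≠ t) :
    ∃ s, G.Adj t s ∧ r ∈ G.side s t := by
  obtain ⟨p, hp⟩ := (hG.connected.preconnected t r).exists_isPath
  cases p with
  | nil => exact absurd rfl hr
  | cons h q =>
    refine ⟨_, h, mem_side_of_walk q (fun he ↦ ?_) (mem_side_self _ _)⟩
    exact ((Walk.cons_isPath_iff _ _).1 hp).2 (q.snd_mem_support_of_mem_edges he)

theorem pathGraph_isBridge {n : ℕ} {v w : Fin n} (hvw : (v : ℕ) + 1 = w) :
    (pathGraph n).IsBridge s(v, w) := by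
  refine isBridge_iff.2 fun h ↦ (show ¬(w : ℕ) ≤ v by omega) <|
    h.mem_of_forall_adj (S := {x : Fin n | (x : ℕ) ≤ v}) (fun a b hab ha ↦ ?_)
      (show (v : ℕ) ≤ v from le_rfl)
  obtain ⟨hab, hne⟩ := deleteEdges_adj.1 hab
  simp only [Set.mem_ofPred_eq, Set.mem_singleton_iff, Sym2.eq_iff, Fin.ext_iff] at ha hne ⊢
  rw [pathGraph_adj] at hab
  omega

theorem pathGraph_isTree (n : ℕ) : (pathGraph (n + 1)).IsTree where
  connected := pathGraph_connected n
  isAcyclic := isAcyclic_iff_forall_adj_isBridge.2 fun v w hvw ↦ by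
    rcases pathGraph_adj.1 hvw with h | h
    · exact pathGraph_isBridge h
    · exact Sym2.eq_swap ▸ pathGraph_isBridge h

def pathGraphShift {m N : ℕ} (a : ℕ) (h : a + m ≤ N) : pathGraph m →g pathGraph N where
  toFun i := ⟨a + i, by omega⟩
  map_rel' := by simp [pathGraph_adj]; omega

def pathGraphCastSucc (n : ℕ) : pathGraph n →g pathGraph (n + 1) where
  toFun := Fin.castSucc
  map_rel' := by simp [pathGraph_adj]

theorem pathGraph_induce_interval_connected {N a b : ℕ} (hab : a ≤ b) (hb : b < N) :
    ((pathGraph N).induce {p : Fin N | a ≤ p ∧ (p : ℕ) ≤ b}).Connected := by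
  have : {p : Fin N | a ≤ p ∧ (p : ℕ) ≤ b} =
      Set.range (pathGraphShift a (show a + (b - a + 1) ≤ N by omega)) := by
    ext p
    simp only [Set.mem_ofPred_eq, Set.mem_range, pathGraphShift, Fin.ext_iff, RelHom.coeFn_mk]
    exact ⟨fun h ↦ ⟨⟨p - a, by omega⟩, by dsimp only; omega⟩, by rintro ⟨i, hi⟩; omega⟩
  rw [this]
  exact (pathGraph_connected _).induce_range _

end SimpleGraph

section TreeDecomp

variable {V ι : Type*} {H : SimpleGraph V} {T : SimpleGraph ι} {X : ι → Set V} {s t : ι}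

theorem IsTreeDecomp.isTree (hX : IsTreeDecomp H T X) : T.IsTree := hX.1

theorem IsTreeDecomp.exists_mem_bag (hX : IsTreeDecomp H T X) (v : V) : ∃ i, v ∈ X i := hX.2.1 v

theorem IsTreeDecomp.exists_bag_of_adj (hX : IsTreeDecomp H T X) {u v : V} (huv : H.Adj u v) :
    ∃ i, u ∈ X i ∧ v ∈ X i := hX.2.2.1 u v huv

theorem IsTreeDecomp.connected_bags (hX : IsTreeDecomp H T X) (v : V) :
    (T.induce {i | v ∈ X i}).Connected := hX.2.2.2 v

def wing (T : SimpleGraph ι) (X : ι → Set V) (s t : ι) : Set V :=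
  ⋃ i ∈ T.side s t, X i

theorem mem_wing {v : V} : v ∈ wing T X s t ↔ ∃ i ∈ T.side s t, v ∈ X i := by
  simp [wing]

theorem IsTreeDecomp.mem_bag_of_mem_side_of_not_mem_side (hX : IsTreeDecomp H T X) {v : V}
    {a b : ι} (hva : v ∈ X a) (hvb : v ∈ X b) (ha : a ∈ T.side s t) (hb : b ∉ T.side s t) :
    v ∈ X s ∩ X t := by
  obtain ⟨q⟩ := (hX.connected_bags v).preconnected ⟨a, hva⟩ ⟨b, hvb⟩
  let p := q.map (Embedding.induce {i | v ∈ X i}).toHom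
  have hp : s(s, t) ∈ p.edges := by_contra fun hp ↦ hb (mem_side_of_walk p hp ha)
  have hsupp : ∀ i ∈ p.support, v ∈ X i := by
    simp only [p, Walk.support_map, List.mem_map]
    rintro _ ⟨i, -, rfl⟩
    exact i.2
  exact ⟨hsupp _ (p.fst_mem_support_of_mem_edges hp), hsupp _ (p.snd_mem_support_of_mem_edges hp)⟩

theorem IsTreeDecomp.mem_bag_of_mem_wing_of_mem_wing (hX : IsTreeDecomp H T X) (hst : T.Adj s t)
    {v : V} (h : v ∈ wing T X s t) (h' : v ∈ wing T X t s) : v ∈ X s ∩ X t := by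
  obtain ⟨a, ha, hva⟩ := mem_wing.1 h
  obtain ⟨b, hb, hvb⟩ := mem_wing.1 h'
  exact hX.mem_bag_of_mem_side_of_not_mem_side hva hvb ha (hX.isTree.not_mem_side_swap hst.symm hb)

theorem IsTreeDecomp.mem_wing_or_mem_wing (hX : IsTreeDecomp H T X) {v : V} {i : ι}
    (hv : v ∈ X i) : v ∈ wing T X s t ∨ v ∈ wing T X t s :=
  (hX.isTree.mem_side_or_mem_side i).imp (fun h ↦ mem_wing.2 ⟨i, h, hv⟩)
    (fun h ↦ mem_wing.2 ⟨i, h, hv⟩)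

theorem IsTreeDecomp.mem_wing_of_adj (hX : IsTreeDecomp H T X) (hst : T.Adj s t) {u v : V}
    (huv : H.Adj u v) (hu : u ∈ wing T X s t) (hu' : u ∉ X s ∩ X t) : v ∈ wing T X s t := by
  obtain ⟨i, hui, hvi⟩ := hX.exists_bag_of_adj huv
  rcases hX.isTree.mem_side_or_mem_side (s := s) (t := t) i with hi | hi
  · exact mem_wing.2 ⟨i, hi, hvi⟩
  · exact (hu' (hX.mem_bag_of_mem_wing_of_mem_wing hst hu (mem_wing.2 ⟨i, hi, hui⟩))).elim

theorem IsTreeDecomp.subset_wing_or_subset_wing (hX : IsTreeDecomp H T X) (hst : T.Adj s t)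
    {C : Set V} (hC : (H.induce C).Connected) (hCX : Disjoint C (X s ∩ X t)) :
    C ⊆ wing T X s t ∨ C ⊆ wing T X t s := by
  obtain ⟨⟨c, hc⟩⟩ := hC.nonempty
  obtain ⟨i, hci⟩ := hX.exists_mem_bag c
  have key : ∀ {s t}, T.Adj s t → Disjoint C (X s ∩ X t) → c ∈ wing T X s t →
      C ⊆ wing T X s t := by
    intro s t hst hCX hcW x hx
    refine (hC.preconnected ⟨c, hc⟩ ⟨x, hx⟩).mem_of_forall_adj
      (S := {y : C | (y : V) ∈ wing T X s t}) ?_ hcW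
    rintro ⟨a, ha⟩ ⟨b, _⟩ hab haW
    exact hX.mem_wing_of_adj hst hab haW (Set.disjoint_left.1 hCX ha)
  refine (hX.mem_wing_or_mem_wing hci).imp (key hst hCX) (key hst.symm ?_)
  rwa [Set.inter_comm]

theorem IsTreeDecomp.not_touches (hX : IsTreeDecomp H T X) (hst : T.Adj s t) {B B' : Set V}
    (hB : B ⊆ wing T X s t) (hB' : B' ⊆ wing T X t s) (hBX : Disjoint B (X s ∩ X t))
    (hB'X : Disjoint B' (X s ∩ X t)) {u v : V} (hu : u ∈ B) (hv : v ∈ B') :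
    ¬(u = v ∨ H.Adj u v) := by
  rintro (rfl | huv)
  · exact Set.disjoint_left.1 hBX hu (hX.mem_bag_of_mem_wing_of_mem_wing hst (hB hu) (hB' hv))
  · have hvW := hX.mem_wing_of_adj hst huv (hB hu) (Set.disjoint_left.1 hBX hu)
    exact Set.disjoint_left.1 hB'X hv (hX.mem_bag_of_mem_wing_of_mem_wing hst hvW (hB' hv))

structure IsBramble (H : SimpleGraph V) (𝓑 : Set (Set V)) : Prop where
  connected : ∀ B ∈ 𝓑, (H.induce B).Connected
  touches : ∀ B ∈ 𝓑, ∀ B' ∈ 𝓑, ∃ u ∈ B, ∃ v ∈ B', u = v ∨ H.Adj u v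

theorem IsTreeDecomp.exists_bag_meets_bramble [Finite ι] (hX : IsTreeDecomp H T X)
    {𝓑 : Set (Set V)} (h𝓑 : IsBramble H 𝓑) : ∃ i, ∀ B ∈ 𝓑, (B ∩ X i).Nonempty := by
  by_contra! h
  choose f hf hfX using h
  replace hfX i : Disjoint (f i) (X i) := Set.disjoint_iff_inter_eq_empty.2 (hfX i)
  obtain ⟨t, ht⟩ := hX.isTree.exists_forall_adj_imp
    (fun s t ↦ ∃ B ∈ 𝓑, Disjoint B (X s ∩ X t) ∧ B ⊆ wing T X t s) fun s t hst ↦ by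
      have hfs : Disjoint (f s) (X s ∩ X t) := (hfX s).mono_right Set.inter_subset_left
      rcases hX.subset_wing_or_subset_wing hst (h𝓑.connected _ (hf s)) hfs with h | h
      · exact Or.inr ⟨f s, hf s, by rwa [Set.inter_comm], h⟩
      · exact Or.inl ⟨f s, hf s, hfs, h⟩
  obtain ⟨⟨b, hb⟩⟩ := (h𝓑.connected _ (hf t)).nonempty
  obtain ⟨r, hbr⟩ := hX.exists_mem_bag b
  obtain ⟨s, hts, hr⟩ :=
    hX.isTree.exists_adj_mem_side fun h : r = t ↦ Set.disjoint_left.1 (hfX t) hb (h ▸ hbr)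
  have hft : Disjoint (f t) (X s ∩ X t) := (hfX t).mono_right Set.inter_subset_right
  have hfW : f t ⊆ wing T X s t := by
    refine (hX.subset_wing_or_subset_wing hts.symm (h𝓑.connected _ (hf t)) hft).resolve_right
      fun h ↦ Set.disjoint_left.1 hft hb ?_
    exact hX.mem_bag_of_mem_wing_of_mem_wing hts.symm (mem_wing.2 ⟨r, hr, hbr⟩) (h hb)
  obtain ⟨B, hB, hBX, hBW⟩ := ht s hts.symm
  obtain ⟨u, hu, v, hv, huv⟩ := h𝓑.touches _ (hf t) _ hB
  exact hX.not_touches hts.symm hfW hBW hft hBX hu hv huv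

end TreeDecomp

section Bandwidth

variable {V : Type*} {H : SimpleGraph V} {N : ℕ}

def bandBags (e : V → Fin N) (w : ℕ) (p : Fin N) : Set V :=
  {v | (p : ℕ) ≤ e v ∧ (e v : ℕ) ≤ p + w}

theorem isTreeDecomp_bandBags [Nonempty V] (e : V → Fin N) {w : ℕ}
    (he : ∀ u v, H.Adj u v → (e u : ℕ) ≤ e v + w) :
    IsTreeDecomp H (pathGraph N) (bandBags e w) := by
  obtain ⟨M, rfl⟩ := Nat.exists_eq_succ_of_ne_zero (Fin.pos (e (Classical.arbitrary V))).ne'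
  refine ⟨pathGraph_isTree M, fun v ↦ ⟨e v, le_rfl, by omega⟩, fun u v huv ↦ ?_, fun v ↦ ?_⟩
  · have := he u v huv
    have := he v u huv.symm
    rcases le_total (e u) (e v) with h | h
    · exact ⟨e u, ⟨le_rfl, by omega⟩, h, by omega⟩
    · exact ⟨e v, ⟨h, by omega⟩, le_rfl, by omega⟩
  · have : {p | v ∈ bandBags e w p} = {p : Fin (M + 1) | e v - w ≤ p ∧ (p : ℕ) ≤ e v} := by
      ext p
      simp only [bandBags, Set.mem_ofPred_eq]
      omega
    rw [this]
    exact pathGraph_induce_interval_connected (Nat.sub_le _ _) (e v).isLt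

theorem ncard_bandBags_le {e : V → Fin N} (he : e.Injective) (w : ℕ) (p : Fin N) :
    (bandBags e w p).ncard ≤ w + 1 := by
  calc (bandBags e w p).ncard ≤ (Set.Icc (p : ℕ) (p + w)).ncard :=
        Set.ncard_le_ncard_of_injOn (fun v ↦ (e v : ℕ)) (fun v hv ↦ hv)
          (fun u _ v _ h ↦ he (Fin.ext h))
    _ = w + 1 := by rw [Set.ncard_Icc_nat]; omega

end Bandwidth

theorem gridGraph_eq_boxProd (k : ℕ) : gridGraph k = pathGraph k □ pathGraph k := by
  ext u v
  simp only [gridGraph, boxProd_adj, pathGraph_adj, abs_eq zero_le_one, Fin.ext_iff]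
  omega

theorem finProdFinEquiv_le_of_adj_gridGraph {k : ℕ} {u v : Fin k × Fin k}
    (h : (gridGraph k).Adj u v) : (finProdFinEquiv u : ℕ) ≤ finProdFinEquiv v + k := by
  rw [gridGraph_eq_boxProd, boxProd_adj, pathGraph_adj, pathGraph_adj] at h
  simp only [finProdFinEquiv_apply_val, Fin.ext_iff] at h ⊢
  have := u.2.isLt
  rcases h with ⟨h | h, h'⟩ | ⟨h | h, h'⟩ <;> rw [h', ← h] <;> grind

section GridBramble

variable {n : ℕ}

local notation "P" => pathGraph (n + 2)

def lastRow (n : ℕ) : Set (Fin (n + 2) × Fin (n + 2)) :=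
  Set.range fun y ↦ (Fin.last _, y)

def lastCol (n : ℕ) : Set (Fin (n + 2) × Fin (n + 2)) :=
  Set.range fun x : Fin (n + 1) ↦ (x.castSucc, Fin.last _)

def cross (i j : Fin (n + 1)) : Set (Fin (n + 2) × Fin (n + 2)) :=
  (Set.range fun y : Fin (n + 1) ↦ (i.castSucc, y.castSucc)) ∪
    Set.range fun x : Fin (n + 1) ↦ (x.castSucc, j.castSucc)

def gridBramble (n : ℕ) : Set (Set (Fin (n + 2) × Fin (n + 2))) :=
  {B | B = lastRow n ∨ B = lastCol n ∨ ∃ i j, B = cross i j}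

theorem connected_induce_lastRow : ((P □ P).induce (lastRow n)).Connected :=
  (pathGraph_connected _).induce_range (boxProdRight P P (Fin.last _)).toHom

theorem connected_induce_lastCol : ((P □ P).induce (lastCol n)).Connected :=
  (pathGraph_connected _).induce_range
    ((boxProdLeft P P (Fin.last _)).toHom.comp (pathGraphCastSucc _))

theorem connected_induce_cross (i j : Fin (n + 1)) : ((P □ P).induce (cross i j)).Connected :=
  induce_union_connected
    ((pathGraph_connected _).induce_range
      ((boxProdRight P P i.castSucc).toHom.comp (pathGraphCastSucc _))).preconnected
    ((pathGraph_connected _).induce_range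
      ((boxProdLeft P P j.castSucc).toHom.comp (pathGraphCastSucc _))).preconnected
    ⟨(i.castSucc, j.castSucc), ⟨j, rfl⟩, ⟨i, rfl⟩⟩

theorem isBramble_gridBramble : IsBramble (P □ P) (gridBramble n) where
  connected := by
    rintro B (rfl | rfl | ⟨i, j, rfl⟩)
    exacts [connected_induce_lastRow, connected_induce_lastCol, connected_induce_cross i j]
  touches := by
    have symm {A B : Set (Fin (n + 2) × Fin (n + 2))}
        (h : ∃ u ∈ A, ∃ v ∈ B, u = v ∨ (P □ P).Adj u v) :
        ∃ u ∈ B, ∃ v ∈ A, u = v ∨ (P □ P).Adj u v := by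
      obtain ⟨u, hu, v, hv, huv⟩ := h
      exact ⟨v, hv, u, hu, huv.imp Eq.symm Adj.symm⟩
    have row_col : ∃ u ∈ lastRow n, ∃ v ∈ lastCol n, u = v ∨ (P □ P).Adj u v :=
      ⟨_, ⟨Fin.last _, rfl⟩, _, ⟨Fin.last n, rfl⟩, Or.inr (by simp [boxProd_adj, pathGraph_adj])⟩
    have row_cross (i j : Fin (n + 1)) :
        ∃ u ∈ lastRow n, ∃ v ∈ cross i j, u = v ∨ (P □ P).Adj u v :=
      ⟨_, ⟨j.castSucc, rfl⟩, _, Or.inr ⟨Fin.last n, rfl⟩,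
        Or.inr (by simp [boxProd_adj, pathGraph_adj])⟩
    have col_cross (i j : Fin (n + 1)) :
        ∃ u ∈ lastCol n, ∃ v ∈ cross i j, u = v ∨ (P □ P).Adj u v :=
      ⟨_, ⟨i, rfl⟩, _, Or.inl ⟨Fin.last n, rfl⟩, Or.inr (by simp [boxProd_adj, pathGraph_adj])⟩
    rintro B (rfl | rfl | ⟨i, j, rfl⟩) B' (rfl | rfl | ⟨i', j', rfl⟩)
    · exact ⟨_, ⟨0, rfl⟩, _, ⟨0, rfl⟩, Or.inl rfl⟩
    · exact row_col
    · exact row_cross i' j'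
    · exact symm row_col
    · exact ⟨_, ⟨0, rfl⟩, _, ⟨0, rfl⟩, Or.inl rfl⟩
    · exact col_cross i' j'
    · exact symm (row_cross i j)
    · exact symm (col_cross i j)
    · exact ⟨_, Or.inl ⟨j', rfl⟩, _, Or.inr ⟨i, rfl⟩, Or.inl rfl⟩

variable {S : Set (Fin (n + 2) × Fin (n + 2))}

theorem forall_row_or_forall_col (hS : ∀ B ∈ gridBramble n, (B ∩ S).Nonempty) :
    (∀ i : Fin (n + 1), ∃ y : Fin (n + 1), (i.castSucc, y.castSucc) ∈ S) ∨
      ∀ j : Fin (n + 1), ∃ x : Fin (n + 1), (x.castSucc, j.castSucc) ∈ S := by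
  by_contra! h
  obtain ⟨⟨i, hi⟩, ⟨j, hj⟩⟩ := h
  obtain ⟨p, hp, hpS⟩ := hS (cross i j) (Or.inr (Or.inr ⟨i, j, rfl⟩))
  rcases hp with ⟨y, rfl⟩ | ⟨x, rfl⟩
  exacts [hi y hpS, hj x hpS]

theorem le_ncard_of_forall_gridBramble (hS : ∀ B ∈ gridBramble n, (B ∩ S).Nonempty) :
    n + 3 ≤ S.ncard := by
  obtain ⟨_, ⟨y, rfl⟩, ha⟩ := hS (lastRow n) (Or.inl rfl)
  obtain ⟨_, ⟨x, rfl⟩, hb⟩ := hS (lastCol n) (Or.inr (Or.inl rfl))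
  obtain ⟨f, hf, hfS⟩ : ∃ f : Fin (n + 1) → Fin (n + 1) × Fin (n + 1), f.Injective ∧
      ∀ i, (f i).map Fin.castSucc Fin.castSucc ∈ S := by
    rcases forall_row_or_forall_col hS with h | h <;> choose g hg using h
    · exact ⟨fun i ↦ (i, g i), fun i j h ↦ congrArg Prod.fst h, hg⟩
    · exact ⟨fun j ↦ (g j, j), fun i j h ↦ congrArg Prod.snd h, hg⟩
  set R := Set.range (Prod.map Fin.castSucc Fin.castSucc ∘ f)
  have hR : R.ncard = n + 1 := (Set.ncard_range_of_injective ((Prod.map_injective.2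
      ⟨Fin.castSucc_injective _, Fin.castSucc_injective _⟩).comp hf)).trans (by simp)
  have hbR : (x.castSucc, Fin.last _) ∉ R := by
    rintro ⟨i, hi⟩
    exact Fin.castSucc_ne_last _ (congrArg Prod.snd hi)
  have haR : (Fin.last _, y) ∉ insert (x.castSucc, Fin.last _) R := by
    rintro (hi | ⟨i, hi⟩)
    exacts [Fin.castSucc_ne_last _ (congrArg Prod.fst hi).symm,
      Fin.castSucc_ne_last _ (congrArg Prod.fst hi)]
  calc n + 3 = (insert (Fin.last _, y) (insert (x.castSucc, Fin.last _) R)).ncard := by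
        rw [Set.ncard_insert_of_notMem haR, Set.ncard_insert_of_notMem hbR, hR]
    _ ≤ S.ncard := Set.ncard_le_ncard
        (Set.insert_subset ha (Set.insert_subset hb (Set.range_subset_iff.2 hfS)))

end GridBramble

theorem treewidth_gridGraph (n : ℕ) : treewidth (gridGraph (n + 2)) = n + 2 := by
  refine IsLeast.csInf_eq ⟨⟨_, _, _, isTreeDecomp_bandBags finProdFinEquiv
    (fun _ _ ↦ finProdFinEquiv_le_of_adj_gridGraph),
    ncard_bandBags_le finProdFinEquiv.injective _⟩, ?_⟩
  rintro w ⟨m, T, X, hX, hXw⟩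
  rw [gridGraph_eq_boxProd] at hX
  obtain ⟨i, hi⟩ := hX.exists_bag_meets_bramble isBramble_gridBramble
  have := le_ncard_of_forall_gridBramble hi
  have := hXw i
  omega

theorem grid_treewidth_general (k : ℕ) :
    k - 1 ≤ treewidth (gridGraph k) ∧ (2 ≤ k → treewidth (gridGraph k) = k) := by
  rcases Nat.lt_or_ge k 2 with hk | hk
  · exact ⟨by omega, by omega⟩
  · obtain ⟨n, rfl⟩ := Nat.exists_eq_add_of_le' hk
    rw [treewidth_gridGraph]
    exact ⟨by omega, fun _ ↦ rfl⟩

theorem grid_treewidth (k : ℕ) (hk : 1 ≤ k) :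
    k - 1 ≤ treewidth (gridGraph k) ∧ (2 ≤ k → treewidth (gridGraph k) = k) :=
  grid_treewidth_general k
end
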